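/- arXiv:1104.0335 — 3 statements merged into one kernel-verified Lean document; each statement's English description precedes it below -/
import Mathlib

section
/- Let G be a group and let f : G → ℂ be a function such that the set of left translates {x·f : x ∈ G} spans a finite-dimensional subspace of the space of all functions G → ℂ. Then the set of right translates {f·x : x ∈ G} also spans a finite-dimensional subspace. -/
/-! The right translates of `f` are the rows and the left translates the columns of the kernel
`F a b = f (a * b)`. Every row is a linear functional (evaluation at a point) applied to the
columns, so the rows lie in the image of the dual of the column span, which is finite-dimensional
together with the column span. -/

/-- The span of the left translates `(x·f)(y) = f (y*x)` of `f`. -/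
noncomputable def leftSpan {G : Type} [Group G] (f : G → ℂ) : Submodule ℂ (G → ℂ) :=
  Submodule.span ℂ (Set.range fun x : G => fun y : G => f (y * x))

/-- The span of the right translates `(f·x)(y) = f (x*y)` of `f`. -/
noncomputable def rightSpan {G : Type} [Group G] (f : G → ℂ) : Submodule ℂ (G → ℂ) :=
  Submodule.span ℂ (Set.range fun x : G => fun y : G => f (x * y))

open Submodule

theorem finiteDimensional_span_range_of_span_range_swap {X Y K : Type*} [Field K]
    (F : X → Y → K) (h : FiniteDimensional K (span K (Set.range (Function.swap F)))) :
    FiniteDimensional K (span K (Set.range F)) := by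
  set W := span K (Set.range (Function.swap F))
  let column (y : Y) : W := ⟨Function.swap F y, subset_span ⟨y, rfl⟩⟩
  let pairWithColumns : Module.Dual K W →ₗ[K] (Y → K) :=
    LinearMap.pi fun y => LinearMap.applyₗ (column y)
  have rows_le : span K (Set.range F) ≤ LinearMap.range pairWithColumns := by
    rw [span_le]
    rintro _ ⟨x, rfl⟩
    exact ⟨(LinearMap.proj x).comp W.subtype, rfl⟩
  exact finiteDimensional_of_le rows_le

/-- If the left translates of `f : G → ℂ` span a finite-dimensional space, then
so do the right translates. -/
theorem rightSpan_finiteDimensional_of_leftSpan {G : Type} [Group G] (f : G → ℂ)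
    (h : FiniteDimensional ℂ (leftSpan f)) :
    FiniteDimensional ℂ (rightSpan f) :=
  finiteDimensional_span_range_of_span_range_swap (fun a b => f (a * b)) h
end

section
/- Transfer principle (Grosshans): Let G be an affine algebraic group over a field k, H ⊆ G a closed subgroup, and N a rational G-module. Then there is a natural k-linear isomorphism (k[G]^H ⊗ N)^G ≅ N^H, where G acts on k[G] by left translation and H acts on k[G] by right translation. -/
open TensorProduct Coalgebra

section defs

variable (k : Type) [Field k]

/-- `δ : V → V ⊗ C` is a (counital, coassociative) right comodule structure,
i.e. a rational representation of the affine group scheme `Spec C`. -/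
def IsComodule {C V : Type} [CommRing C] [Bialgebra k C]
    [AddCommGroup V] [Module k V] (δ : V →ₗ[k] V ⊗[k] C) : Prop :=
  ((TensorProduct.rid k V).toLinearMap ∘ₗ
      TensorProduct.map LinearMap.id (counit (R := k) (A := C)) ∘ₗ δ = LinearMap.id) ∧
  ((TensorProduct.assoc k V C C).toLinearMap ∘ₗ TensorProduct.map δ LinearMap.id ∘ₗ δ =
      TensorProduct.map LinearMap.id (comul (R := k)) ∘ₗ δ)

variable {C V : Type} [CommRing C] [Bialgebra k C] [AddCommGroup V] [Module k V]

/-- The invariants (coinvariants) of a coaction: `{v | δ v = v ⊗ 1}`. -/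
noncomputable def coinvariants (δ : V →ₗ[k] V ⊗[k] C) : Submodule k V :=
  LinearMap.ker (δ - (TensorProduct.mk k V C).flip 1)

variable {A B : Type} [CommRing A] [HopfAlgebra k A] [CommRing B] [HopfAlgebra k B]

/-- The right-translation coaction of `K` (with `k[K] = B`) on `k[G] = A`,
`f ↦ Σ f₁ ⊗ π(f₂)`; its invariants are `k[G]^K`. -/
noncomputable def rightCoact (π : A →ₐ[k] B) : A →ₗ[k] A ⊗[k] B :=
  TensorProduct.map LinearMap.id π.toLinearMap ∘ₗ comul

/-- The left-translation coaction of `G` on `k[G] = A`, written as a right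
`A`-comodule structure `f ↦ Σ f₂ ⊗ S(f₁)`. -/
noncomputable def leftCoact : A →ₗ[k] A ⊗[k] A :=
  TensorProduct.map LinearMap.id (HopfAlgebra.antipode (R := k)) ∘ₗ
    (TensorProduct.comm k A A).toLinearMap ∘ₗ comul

variable {N : Type} [AddCommGroup N] [Module k N]

/-- The diagonal `G`-coaction on `k[G] ⊗ N`, combining left translation on
`k[G]` with the given coaction on `N`. -/
noncomputable def diagCoact (δN : N →ₗ[k] N ⊗[k] A) :
    A ⊗[k] N →ₗ[k] (A ⊗[k] N) ⊗[k] A :=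
  TensorProduct.map LinearMap.id (LinearMap.mul' k A) ∘ₗ
    (TensorProduct.tensorTensorTensorComm k A A N A).toLinearMap ∘ₗ
      TensorProduct.map (leftCoact k) δN

end defs

/-!
Read `A ⊗ N` as `N`-valued functions on `G`, on which `G` acts diagonally by
`(g • F)(x) = g • F (g⁻¹ x)`. A function is invariant iff `F x = x • F 1` for all `x`, so the orbit
map `v ↦ (x ↦ x • v)` and evaluation at `1` are inverse isomorphisms between `N` and
`(A ⊗ N)^G`; the two identities behind this are coassociativity of the coaction and
`S(a₁) a₂ = ε(a)`. The orbit map of `v` is right `H`-invariant iff `(x h) • v = x • v` for all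
`x ∈ G`, `h ∈ H`, i.e. iff `v ∈ N^H`. Finally, `k` being a field, `k[G]^H ⊗ N` is the space of
right `H`-invariants of `A ⊗ N`.
-/

section Coaction

variable {k : Type} [Field k] {C V N : Type} [CommRing C] [Bialgebra k C]
  [AddCommGroup V] [Module k V] [AddCommGroup N] [Module k N]

lemma mem_coinvariants_iff (δ : N →ₗ[k] N ⊗[k] C) (x : N) :
    x ∈ coinvariants k δ ↔ δ x = x ⊗ₜ[k] 1 := by
  simp [coinvariants, sub_eq_zero]

lemma range_rTensor_subtype_coinvariants (ρ : V →ₗ[k] V ⊗[k] C) :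
    LinearMap.range (TensorProduct.map (coinvariants k ρ).subtype (LinearMap.id (M := N))) =
      LinearMap.ker ((ρ - (TensorProduct.mk k V C).flip 1).rTensor N) :=
  (Module.Flat.rTensor_exact N (LinearMap.exact_subtype_ker_map _)).linearMap_ker_eq.symm

lemma IsComodule.rid_lTensor_counit_apply {δ : N →ₗ[k] N ⊗[k] C} (hδ : IsComodule k δ)
    (v : N) : TensorProduct.rid k N (counit.lTensor N (δ v)) = v :=
  LinearMap.congr_fun hδ.1 v

lemma IsComodule.assoc_rTensor_apply {δ : N →ₗ[k] N ⊗[k] C} (hδ : IsComodule k δ) (v : N) :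
    TensorProduct.assoc k N C C (δ.rTensor C (δ v)) = comul.lTensor N (δ v) :=
  LinearMap.congr_fun hδ.2 v

end Coaction

section OrbitMap

variable {k : Type} [CommSemiring k] {C N : Type} [AddCommMonoid C] [Module k C]
  [AddCommMonoid N] [Module k N]

noncomputable def orbitMap (δ : N →ₗ[k] N ⊗[k] C) : N →ₗ[k] C ⊗[k] N :=
  (TensorProduct.comm k N C).toLinearMap ∘ₗ δ

lemma orbitMap_apply (δ : N →ₗ[k] N ⊗[k] C) (v : N) :
    orbitMap δ v = TensorProduct.comm k N C (δ v) :=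
  rfl

lemma rTensor_flip_mk_orbitMap {B : Type} [AddCommMonoid B] [Module k B]
    (δ : N →ₗ[k] N ⊗[k] C) (b : B) (v : N) :
    ((TensorProduct.mk k C B).flip b).rTensor N (orbitMap δ v) =
      TensorProduct.rightComm k C N B ((orbitMap δ).rTensor B (v ⊗ₜ b)) := by
  rw [LinearMap.rTensor_tmul, orbitMap_apply]
  generalize δ v = y
  induction y using TensorProduct.induction_on with
  | zero => simp
  | tmul n c => simp
  | add y y' hy hy' => simp_all [TensorProduct.add_tmul]

variable (k C N) in
noncomputable def evalOne [CoalgebraStruct k C] : C ⊗[k] N →ₗ[k] N :=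
  (TensorProduct.lid k N).toLinearMap ∘ₗ (counit (R := k) (A := C)).rTensor N

end OrbitMap

section Comodule

variable {k : Type} [Field k] {C N : Type} [CommRing C] [Bialgebra k C]
  [AddCommGroup N] [Module k N] {δ : N →ₗ[k] N ⊗[k] C}

lemma evalOne_orbitMap (hδ : IsComodule k δ) (v : N) : evalOne k C N (orbitMap δ v) = v := by
  simpa only [evalOne, orbitMap, LinearMap.coe_comp, LinearEquiv.coe_coe, Function.comp_apply,
    LinearMap.rTensor_comm, TensorProduct.lid_comm] using hδ.rid_lTensor_counit_apply v

lemma orbitMap_injective (hδ : IsComodule k δ) : Function.Injective (orbitMap δ) :=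
  Function.LeftInverse.injective (evalOne_orbitMap hδ)

end Comodule

section Hopf

variable {k : Type} [Field k] {A : Type} [CommRing A] [HopfAlgebra k A]

lemma leftCoact_eq : leftCoact k = (HopfAlgebra.antipode k).lTensor A ∘ₗ
    (TensorProduct.comm k A A).toLinearMap ∘ₗ comul :=
  rfl

lemma mul'_leftCoact (a : A) :
    LinearMap.mul' k A (leftCoact k a) = algebraMap k A (counit a) := by
  rw [leftCoact_eq, LinearMap.comp_apply, LinearMap.comp_apply, LinearEquiv.coe_coe,
    LinearMap.lTensor_comm, LinearMap.mul'_comm, HopfAlgebra.mul_antipode_rTensor_comul_apply]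

variable (k A) in
/-- `b ⊗ c ↦ Σ c₂ ⊗ S(c₁) b`: as a function on `G × G`, `F ↦ ((x, y) ↦ F (y, y⁻¹ x))`. -/
noncomputable def shear : A ⊗[k] A →ₗ[k] A ⊗[k] A :=
  (LinearMap.mul' k A).lTensor A ∘ₗ (TensorProduct.assoc k A A A).toLinearMap ∘ₗ
    (leftCoact k).rTensor A ∘ₗ (TensorProduct.comm k A A).toLinearMap

open HopfAlgebra in
lemma shear_comul (a : A) : shear k A (comul a) = a ⊗ₜ[k] 1 := by
  have hreassoc : (LinearMap.mul' k A).lTensor A ∘ₗ (TensorProduct.assoc k A A A).toLinearMap ∘ₗ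
      ((antipode k).lTensor A ∘ₗ (TensorProduct.comm k A A).toLinearMap).rTensor A ∘ₗ
      (TensorProduct.comm k A (A ⊗[k] A)).toLinearMap ∘ₗ
      (TensorProduct.assoc k A A A).toLinearMap =
      (TensorProduct.comm k A A).toLinearMap ∘ₗ
        (LinearMap.mul' k A ∘ₗ (antipode k).lTensor A).rTensor A := by
    ext x y z
    simp [mul_comm]
  calc
    -- coassociativity: `Σ a₂₂ ⊗ S(a₂₁) a₁ = Σ a₃ ⊗ S(a₂) a₁`
    shear k A (comul a) = ((TensorProduct.comm k A A).toLinearMap ∘ₗ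
        (LinearMap.mul' k A ∘ₗ (antipode k).lTensor A).rTensor A) (comul.rTensor A (comul a)) := by
      rw [← hreassoc]
      simp [shear, leftCoact_eq, LinearMap.rTensor_comm, LinearMap.lTensor_comp_apply]
    _ = a ⊗ₜ[k] 1 := by
      rw [LinearMap.comp_apply, ← LinearMap.rTensor_comp_apply, LinearMap.comp_assoc,
        mul_antipode_lTensor_comul]
      simp [LinearMap.rTensor_comp_apply]

end Hopf

section Diagonal

variable {k : Type} [Field k] {A : Type} [CommRing A] [HopfAlgebra k A]
  {N : Type} [AddCommGroup N] [Module k N]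

lemma diagCoact_comp_comm (δN : N →ₗ[k] N ⊗[k] A) :
    diagCoact k δN ∘ₗ (TensorProduct.comm k N A).toLinearMap =
      (TensorProduct.assoc k A N A).symm.toLinearMap ∘ₗ
        (TensorProduct.leftComm k N A A).toLinearMap ∘ₗ (shear k A).lTensor N ∘ₗ
          (TensorProduct.assoc k N A A).toLinearMap ∘ₗ δN.rTensor A := by
  refine TensorProduct.ext' fun n a => ?_
  simp only [diagCoact, LinearMap.comp_apply, LinearEquiv.coe_coe, TensorProduct.comm_tmul,
    TensorProduct.map_tmul, LinearMap.rTensor_tmul]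
  generalize δN n = y
  induction y using TensorProduct.induction_on with
  | zero => simp
  | tmul m r =>
    simp only [shear, TensorProduct.assoc_tmul, LinearMap.lTensor_tmul, LinearMap.comp_apply,
      LinearEquiv.coe_coe, TensorProduct.comm_tmul, LinearMap.rTensor_tmul]
    generalize leftCoact k a = z
    induction z using TensorProduct.induction_on with
    | zero => simp
    | tmul p q => simp [mul_comm]
    | add z z' hz hz' => simp_all [TensorProduct.tmul_add, TensorProduct.add_tmul]
  | add y y' hy hy' => simp_all [TensorProduct.tmul_add, TensorProduct.add_tmul]

lemma diagCoact_orbitMap {δN : N →ₗ[k] N ⊗[k] A} (hN : IsComodule k δN) (v : N) :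
    diagCoact k δN (orbitMap δN v) = orbitMap δN v ⊗ₜ[k] 1 := by
  calc
    diagCoact k δN (orbitMap δN v) = (TensorProduct.assoc k A N A).symm
        (TensorProduct.leftComm k N A A ((shear k A ∘ₗ comul).lTensor N (δN v))) := by
      rw [orbitMap, ← LinearMap.comp_apply (diagCoact k δN), ← LinearMap.comp_assoc,
        diagCoact_comp_comm]
      simp [hN.assoc_rTensor_apply, LinearMap.lTensor_comp_apply]
    _ = orbitMap δN v ⊗ₜ[k] 1 := by
      rw [show shear k A ∘ₗ comul = (TensorProduct.mk k A A).flip 1 from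
        LinearMap.ext shear_comul, orbitMap_apply]
      generalize δN v = y
      induction y using TensorProduct.induction_on with
      | zero => simp
      | tmul n a => simp
      | add y y' hy hy' => simp_all [TensorProduct.add_tmul]

lemma lift_lsmul_diagCoact (δN : N →ₗ[k] N ⊗[k] A) (x : A ⊗[k] N) :
    TensorProduct.lift (Algebra.lsmul k k (A ⊗[k] N)).toLinearMap.flip (diagCoact k δN x) =
      orbitMap δN (evalOne k A N x) := by
  have hmul : ∀ (z : A ⊗[k] A) (y : N ⊗[k] A),
      TensorProduct.lift (Algebra.lsmul k k (A ⊗[k] N)).toLinearMap.flip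
        (TensorProduct.map LinearMap.id (LinearMap.mul' k A)
          (TensorProduct.tensorTensorTensorComm k A A N A (z ⊗ₜ y))) =
        LinearMap.mul' k A z • TensorProduct.comm k N A y := by
    intro z y
    induction z using TensorProduct.induction_on with
    | zero => simp
    | tmul p q =>
      induction y using TensorProduct.induction_on with
      | zero => simp
      | tmul m r => simp [TensorProduct.smul_tmul', mul_comm, mul_left_comm]
      | add y y' hy hy' => simp_all [TensorProduct.tmul_add]
    | add z z' hz hz' => simp_all [TensorProduct.add_tmul, add_smul]
  induction x using TensorProduct.induction_on with
  | zero => simp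
  | tmul a n =>
    simp only [diagCoact, LinearMap.comp_apply, LinearEquiv.coe_coe, TensorProduct.map_tmul, hmul,
      mul'_leftCoact, algebraMap_smul]
    simp [evalOne, orbitMap_apply]
  | add x x' hx hx' => simp_all

lemma orbitMap_evalOne {δN : N →ₗ[k] N ⊗[k] A} {x : A ⊗[k] N}
    (hx : x ∈ coinvariants k (diagCoact k δN)) : orbitMap δN (evalOne k A N x) = x := by
  rw [mem_coinvariants_iff] at hx
  simpa [hx] using (lift_lsmul_diagCoact δN x).symm

end Diagonal

section Restriction

variable {k : Type} [Field k] {A : Type} [CommRing A] [HopfAlgebra k A]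
  {B : Type} [CommRing B] [HopfAlgebra k B] {N : Type} [AddCommGroup N] [Module k N]

lemma rTensor_rightCoact_orbitMap {δN : N →ₗ[k] N ⊗[k] A} (hN : IsComodule k δN)
    (π : A →ₐ[k] B) (v : N) :
    (rightCoact k π).rTensor N (orbitMap δN v) =
      TensorProduct.rightComm k A N B
        ((orbitMap δN).rTensor B (π.toLinearMap.lTensor N (δN v))) := by
  have hshuffle : ∀ w : (N ⊗[k] A) ⊗[k] A,
      (π.toLinearMap.lTensor A).rTensor N
        (TensorProduct.comm k N (A ⊗[k] A) (TensorProduct.assoc k N A A w)) =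
      TensorProduct.rightComm k A N B
        (TensorProduct.map (TensorProduct.comm k N A).toLinearMap π.toLinearMap w) := by
    intro w
    induction w using TensorProduct.induction_on with
    | zero => simp
    | tmul y c =>
      induction y using TensorProduct.induction_on with
      | zero => simp
      | tmul n a => simp
      | add y y' hy hy' => simp_all [TensorProduct.add_tmul]
    | add w w' hw hw' => simp_all
  rw [← LinearMap.comp_apply ((orbitMap δN).rTensor B), LinearMap.rTensor_comp_lTensor, orbitMap,
    ← LinearMap.map_rTensor, ← hshuffle, hN.assoc_rTensor_apply]
  rw [rightCoact, ← LinearMap.lTensor_def, LinearMap.rTensor_comp_apply, LinearMap.comp_apply,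
    LinearEquiv.coe_coe, LinearMap.rTensor_comm, LinearMap.rTensor_comm]

lemma orbitMap_mem_ker_iff {δN : N →ₗ[k] N ⊗[k] A} (hN : IsComodule k δN) (π : A →ₐ[k] B)
    (v : N) :
    orbitMap δN v ∈ LinearMap.ker ((rightCoact k π - (TensorProduct.mk k A B).flip 1).rTensor N) ↔
      v ∈ coinvariants k (TensorProduct.map LinearMap.id π.toLinearMap ∘ₗ δN) := by
  have hinj : Function.Injective (TensorProduct.rightComm k A N B ∘ (orbitMap δN).rTensor B) :=
    (TensorProduct.rightComm k A N B).injective.comp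
      (Module.Flat.rTensor_preserves_injective_linearMap _ (orbitMap_injective hN))
  rw [LinearMap.mem_ker, LinearMap.rTensor_sub, LinearMap.sub_apply, sub_eq_zero,
    rTensor_rightCoact_orbitMap hN, rTensor_flip_mk_orbitMap, mem_coinvariants_iff]
  exact hinj.eq_iff

lemma map_orbitMap_coinvariants {δN : N →ₗ[k] N ⊗[k] A} (hN : IsComodule k δN) (π : A →ₐ[k] B) :
    (coinvariants k (TensorProduct.map LinearMap.id π.toLinearMap ∘ₗ δN)).map (orbitMap δN) =
      LinearMap.range (TensorProduct.map (coinvariants k (rightCoact k π)).subtype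
        (LinearMap.id (M := N))) ⊓ coinvariants k (diagCoact k δN) := by
  rw [range_rTensor_subtype_coinvariants]
  ext x
  constructor
  · rintro ⟨v, hv, rfl⟩
    exact ⟨(orbitMap_mem_ker_iff hN π v).2 hv,
      (mem_coinvariants_iff _ _).2 (diagCoact_orbitMap hN v)⟩
  · rintro ⟨hker, hdiag⟩
    refine ⟨evalOne k A N x, (orbitMap_mem_ker_iff hN π _).1 ?_, orbitMap_evalOne hdiag⟩
    rwa [orbitMap_evalOne hdiag]

end Restriction

theorem transfer_principle_general
    (k : Type) [Field k]
    (A : Type) [CommRing A] [HopfAlgebra k A]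
    (B : Type) [CommRing B] [HopfAlgebra k B]
    (π : A →ₐ[k] B)
    (N : Type) [AddCommGroup N] [Module k N]
    (δN : N →ₗ[k] N ⊗[k] A) (hN : IsComodule k δN) :
    Nonempty
      ((↥(LinearMap.range
            (TensorProduct.map (coinvariants k (rightCoact k π)).subtype
              (LinearMap.id (M := N))) ⊓
          coinvariants k (diagCoact k δN))) ≃ₗ[k]
        ↥(coinvariants k (TensorProduct.map LinearMap.id π.toLinearMap ∘ₗ δN))) :=
  ⟨((Submodule.equivMapOfInjective _ (orbitMap_injective hN) _).trans
    (LinearEquiv.ofEq _ _ (map_orbitMap_coinvariants hN π))).symm⟩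

/-- Grosshans' transfer principle: for an affine algebraic group `G` over a
field `k` with coordinate Hopf algebra `A = k[G]`, a closed subgroup `H` given
by a surjection `π : k[G] → k[H]` of Hopf algebras, and a rational `G`-module
`N` (an `A`-comodule), there is a `k`-linear isomorphism
`(k[G]^H ⊗ N)^G ≅ N^H`, where `G` acts diagonally on `k[G]^H ⊗ N` via left
translation on `k[G]^H`, and `H` acts on `k[G]` by right translation. -/
theorem transfer_principle
    (k : Type) [Field k]
    (A : Type) [CommRing A] [HopfAlgebra k A]
    (B : Type) [CommRing B] [HopfAlgebra k B]
    (π : A →ₐ[k] B) (hsurj : Function.Surjective π)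
    (hπcomul : TensorProduct.map π.toLinearMap π.toLinearMap ∘ₗ Coalgebra.comul =
      Coalgebra.comul (R := k) ∘ₗ π.toLinearMap)
    (hπcounit : Coalgebra.counit (R := k) ∘ₗ π.toLinearMap = Coalgebra.counit (R := k))
    (N : Type) [AddCommGroup N] [Module k N]
    (δN : N →ₗ[k] N ⊗[k] A) (hN : IsComodule k δN) :
    Nonempty
      ((↥(LinearMap.range
            (TensorProduct.map (coinvariants k (rightCoact k π)).subtype
              (LinearMap.id (M := N))) ⊓
          coinvariants k (diagCoact k δN))) ≃ₗ[k]
        ↥(coinvariants k (TensorProduct.map LinearMap.id π.toLinearMap ∘ₗ δN))) :=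
  transfer_principle_general k A B π N δN hN
end

section
/- Let G be a compact topological group and u a monoidal natural transformation of the forgetful functor from finite-dimensional continuous complex representations of G to vector spaces. Then u is invertible: the natural transformation u' defined by u'_V = (u_{V^∨})^∨ (the transpose of the component at the dual representation) is a two-sided inverse of u. -/
/-- A finite-dimensional representation of a topological group is continuous if
all its matrix coefficients are continuous. -/
def IsCtsRep {G : Type} [Group G] [TopologicalSpace G]
    {V : Type} [AddCommGroup V] [Module ℂ V]
    (ρ : Representation ℂ G V) : Prop :=
  ∀ (φ : Module.Dual ℂ V) (v : V), Continuous fun g : G => φ (ρ g v)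

/-!
Naturality of `u` at the evaluation pairing `V^∨ ⊗ V → ℂ`, which is equivariant into the trivial
representation, together with monoidality and `u_ℂ = id`, gives `(u_{V^∨} φ) (u_V v) = φ v`,
i.e. `(u_{V^∨})^∨ ∘ u_V = id`. In finite dimensions a one-sided inverse is two-sided.
-/

open TensorProduct Module

theorem IsCtsRep.one {G : Type} [Group G] [TopologicalSpace G]
    {V : Type} [AddCommGroup V] [Module ℂ V] :
    IsCtsRep (1 : Representation ℂ G V) := fun φ v => by
  simpa using continuous_const (y := φ v)

theorem IsCtsRep.dual {G : Type} [Group G] [TopologicalSpace G] [IsTopologicalGroup G]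
    {V : Type} [AddCommGroup V] [Module ℂ V] [FiniteDimensional ℂ V]
    {ρ : Representation ℂ G V} (hρ : IsCtsRep ρ) : IsCtsRep ρ.dual := by
  intro Φ φ
  obtain ⟨v, rfl⟩ := (evalEquiv ℂ V).surjective Φ
  simp only [Representation.dual_apply, Dual.transpose_apply, evalEquiv_apply, Dual.eval_apply,
    LinearMap.comp_apply]
  exact (hρ φ v).comp continuous_inv

-- Expanding the first factor in a basis reduces to the matrix coefficients of `σ`.
theorem IsCtsRep.tprod {G : Type} [Group G] [TopologicalSpace G]
    {V W : Type} [AddCommGroup V] [Module ℂ V] [FiniteDimensional ℂ V]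
    [AddCommGroup W] [Module ℂ W]
    {ρ : Representation ℂ G V} {σ : Representation ℂ G W}
    (hρ : IsCtsRep ρ) (hσ : IsCtsRep σ) : IsCtsRep (ρ.tprod σ) := by
  intro φ t
  induction t using TensorProduct.induction_on with
  | zero => simpa using continuous_const (y := (0 : ℂ))
  | add x y hx hy =>
    simp only [map_add]
    exact hx.add hy
  | tmul v w =>
    let b := Basis.ofVectorSpace ℂ V
    have hexpand : ∀ g, φ (ρ.tprod σ g (v ⊗ₜ w)) =
        ∑ i, b.coord i (ρ g v) * (curry φ (b i)) (σ g w) := by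
      intro g
      conv_lhs => rw [Representation.tprod_apply, map_tmul, ← b.sum_repr (ρ g v)]
      simp only [sum_tmul, map_sum, ← smul_tmul', map_smul, smul_eq_mul, Basis.coord_apply,
        curry_apply]
    simp_rw [hexpand]
    exact continuous_finsetSum _ fun i _ => (hρ _ v).mul (hσ _ w)

theorem Representation.contractLeft_comp_dual_tprod {k G V : Type} [CommSemiring k] [Group G]
    [AddCommGroup V] [Module k V] (ρ : Representation k G V) (g : G) :
    contractLeft k V ∘ₗ ρ.dual.tprod ρ g = contractLeft k V := by
  ext φ v
  simp [Representation.tprod_apply, Representation.dual_apply, Dual.transpose_apply,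
    ← Module.End.mul_apply, ← map_mul]

theorem Module.evalEquiv_symm_dualMap_comp_eq_id {R V W : Type} [CommSemiring R]
    [AddCommGroup V] [Module R V] [IsReflexive R V] [AddCommGroup W] [Module R W] [IsReflexive R W]
    (f : V →ₗ[R] W) (f' : Dual R V →ₗ[R] Dual R W)
    (h : contractLeft R W ∘ₗ TensorProduct.map f' f = contractLeft R V) :
    ((evalEquiv R V).symm.toLinearMap ∘ₗ f'.dualMap ∘ₗ (evalEquiv R W).toLinearMap) ∘ₗ f =
      LinearMap.id := by
  ext v
  refine (evalEquiv R V).injective (LinearMap.ext fun φ => ?_)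
  simpa using congr($h (φ ⊗ₜ v))

theorem monoidal_natTrans_invertible_general
    (G : Type) [Group G] [TopologicalSpace G] [IsTopologicalGroup G]
    (u : ∀ (V : Type) [AddCommGroup V] [Module ℂ V] [FiniteDimensional ℂ V],
      Representation ℂ G V → (V →ₗ[ℂ] V))
    -- naturality with respect to equivariant maps
    (hnat : ∀ (V W : Type) [AddCommGroup V] [Module ℂ V] [FiniteDimensional ℂ V]
      [AddCommGroup W] [Module ℂ W] [FiniteDimensional ℂ W]
      (ρ : Representation ℂ G V) (σ : Representation ℂ G W),
      IsCtsRep ρ → IsCtsRep σ → ∀ f : V →ₗ[ℂ] W,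
        (∀ g : G, f ∘ₗ ρ g = σ g ∘ₗ f) → u W σ ∘ₗ f = f ∘ₗ u V ρ)
    -- monoidality: `u_{V ⊗ W} = u_V ⊗ u_W`
    (hmon : ∀ (V W : Type) [AddCommGroup V] [Module ℂ V] [FiniteDimensional ℂ V]
      [AddCommGroup W] [Module ℂ W] [FiniteDimensional ℂ W]
      (ρ : Representation ℂ G V) (σ : Representation ℂ G W),
      IsCtsRep ρ → IsCtsRep σ →
        u (TensorProduct ℂ V W) (ρ.tprod σ) = TensorProduct.map (u V ρ) (u W σ))
    -- `u` is the identity on the trivial representation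
    (hunit : u ℂ 1 = LinearMap.id)
    -- the component of `u` at a continuous representation
    (V : Type) [AddCommGroup V] [Module ℂ V] [FiniteDimensional ℂ V]
    (ρ : Representation ℂ G V) (hρ : IsCtsRep ρ) :
    Function.Bijective (u V ρ) ∧
    ((Module.evalEquiv ℂ V).symm.toLinearMap ∘ₗ
        (u (Module.Dual ℂ V) ρ.dual).dualMap ∘ₗ (Module.evalEquiv ℂ V).toLinearMap) ∘ₗ
        u V ρ = LinearMap.id ∧
    u V ρ ∘ₗ ((Module.evalEquiv ℂ V).symm.toLinearMap ∘ₗ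
        (u (Module.Dual ℂ V) ρ.dual).dualMap ∘ₗ (Module.evalEquiv ℂ V).toLinearMap) =
      LinearMap.id := by
  have hcontract :
      contractLeft ℂ V ∘ₗ TensorProduct.map (u _ ρ.dual) (u V ρ) = contractLeft ℂ V := by
    have hnatural := hnat _ _ (ρ.dual.tprod ρ) 1 (hρ.dual.tprod hρ) IsCtsRep.one (contractLeft ℂ V)
      fun g => by rw [ρ.contractLeft_comp_dual_tprod, MonoidHom.one_apply, Module.End.one_eq_id,
        LinearMap.id_comp]
    rwa [hunit, hmon _ _ _ _ hρ.dual hρ, LinearMap.id_comp, eq_comm] at hnatural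
  have hleft := evalEquiv_symm_dualMap_comp_eq_id _ _ hcontract
  have hright := (LinearMap.comp_eq_id_comm _ _).mp hleft
  exact ⟨⟨LinearMap.injective_of_comp_eq_id _ _ hleft,
    LinearMap.surjective_of_comp_eq_id _ _ hright⟩, hleft, hright⟩

/-- A monoidal natural transformation `u` of the forgetful functor from
finite-dimensional continuous complex representations of a compact topological
group `G` to vector spaces is invertible, with two-sided inverse
`u'_V = (u_{V^∨})^∨`, the transpose of the component at the contragredient
representation. -/
theorem monoidal_natTrans_invertible
    (G : Type) [Group G] [TopologicalSpace G] [IsTopologicalGroup G] [CompactSpace G]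
    (u : ∀ (V : Type) [AddCommGroup V] [Module ℂ V] [FiniteDimensional ℂ V],
      Representation ℂ G V → (V →ₗ[ℂ] V))
    -- naturality with respect to equivariant maps
    (hnat : ∀ (V W : Type) [AddCommGroup V] [Module ℂ V] [FiniteDimensional ℂ V]
      [AddCommGroup W] [Module ℂ W] [FiniteDimensional ℂ W]
      (ρ : Representation ℂ G V) (σ : Representation ℂ G W),
      IsCtsRep ρ → IsCtsRep σ → ∀ f : V →ₗ[ℂ] W,
        (∀ g : G, f ∘ₗ ρ g = σ g ∘ₗ f) → u W σ ∘ₗ f = f ∘ₗ u V ρ)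
    -- monoidality: `u_{V ⊗ W} = u_V ⊗ u_W`
    (hmon : ∀ (V W : Type) [AddCommGroup V] [Module ℂ V] [FiniteDimensional ℂ V]
      [AddCommGroup W] [Module ℂ W] [FiniteDimensional ℂ W]
      (ρ : Representation ℂ G V) (σ : Representation ℂ G W),
      IsCtsRep ρ → IsCtsRep σ →
        u (TensorProduct ℂ V W) (ρ.tprod σ) = TensorProduct.map (u V ρ) (u W σ))
    -- `u` is the identity on the trivial representation
    (hunit : u ℂ 1 = LinearMap.id)
    -- the component of `u` at a continuous representation
    (V : Type) [AddCommGroup V] [Module ℂ V] [FiniteDimensional ℂ V]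
    (ρ : Representation ℂ G V) (hρ : IsCtsRep ρ) :
    Function.Bijective (u V ρ) ∧
    ((Module.evalEquiv ℂ V).symm.toLinearMap ∘ₗ
        (u (Module.Dual ℂ V) ρ.dual).dualMap ∘ₗ (Module.evalEquiv ℂ V).toLinearMap) ∘ₗ
        u V ρ = LinearMap.id ∧
    u V ρ ∘ₗ ((Module.evalEquiv ℂ V).symm.toLinearMap ∘ₗ
        (u (Module.Dual ℂ V) ρ.dual).dualMap ∘ₗ (Module.evalEquiv ℂ V).toLinearMap) =
      LinearMap.id :=
  monoidal_natTrans_invertible_general G u hnat hmon hunit V ρ hρ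
end
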